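/- Let L = (S, Act, →) be a labelled transition system, σ a path in L, and φ an ACTL formula. Then the mapping ks' preserves truth: L,σ ⊨ φ if and only if ks'(L), ks'(σ) ⊨ ks'(φ). -/
import Mathlib


/-!
Statement 6: the mapping `ks'` from ACTL (over labelled transition systems) to CTL
(over Kripke structures) preserves truth:
`L,σ ⊨ φ` iff `ks'(L), ks'(σ) ⊨ ks'(φ)`.
-/

namespace Stmt6

/-- A path in a labelled transition system with transition relation `Tr ⊆ S × Act × S`. -/
structure LPath {S Act : Type} (Tr : S → Act → S → Prop) where
  states : ℕ → S
  acts : ℕ → Act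
  valid : ∀ n, Tr (states n) (acts n) (states (n + 1))

/-- A path in a Kripke structure with transition relation `R ⊆ S × S`. -/
structure KPath {S : Type} (R : S → S → Prop) where
  states : ℕ → S
  valid : ∀ n, R (states n) (states (n + 1))

/-- Action formulas over `Act`: boolean combinations of actions. -/
inductive AForm (Act : Type) : Type
  | tt : AForm Act
  | atom : Act → AForm Act
  | neg : AForm Act → AForm Act
  | and : AForm Act → AForm Act → AForm Act

/-- Satisfaction of an action formula by an action. -/
def asatA {Act : Type} : AForm Act → Act → Prop
  | .tt, _ => True
  | .atom b, a => a = b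
  | .neg χ, a => ¬ asatA χ a
  | .and χ χ', a => asatA χ a ∧ asatA χ' a

mutual
/-- ACTL state formulas over actions `Act`: `φ ::= true | ¬φ | φ∧φ' | ∃π`. -/
inductive ASF (Act : Type) : Type
  | tt : ASF Act
  | neg : ASF Act → ASF Act
  | and : ASF Act → ASF Act → ASF Act
  | ex : APF Act → ASF Act

/-- ACTL path formulas over actions `Act`:
`π ::= X_χ φ | φ _χU_χ' φ' | φ _χW_χ' φ'`. -/
inductive APF (Act : Type) : Type
  | anext : AForm Act → ASF Act → APF Act
  | unt : ASF Act → AForm Act → AForm Act → ASF Act → APF Act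
  | wunt : ASF Act → AForm Act → AForm Act → ASF Act → APF Act
end

mutual
/-- Satisfaction of ACTL state formulas at a state of an LTS. -/
def asatS {S Act : Type} (Tr : S → Act → S → Prop) : ASF Act → S → Prop
  | .tt, _ => True
  | .neg φ, s => ¬ asatS Tr φ s
  | .and φ ψ, s => asatS Tr φ s ∧ asatS Tr ψ s
  | .ex π, s => ∃ σ : LPath Tr, σ.states 0 = s ∧ asatP Tr π σ

/-- Satisfaction of ACTL path formulas on a path of an LTS.
`X_χ φ` holds iff the first transition satisfies `χ` and its target satisfies `φ`;
`φ _χU_χ' φ'` holds iff at some later position the incoming transition satisfies `χ'`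
and the state satisfies `φ'`, while all earlier states satisfy `φ` and all earlier
transitions satisfy `χ`; `φ _χW_χ' φ'` is the weak variant. -/
def asatP {S Act : Type} (Tr : S → Act → S → Prop) : APF Act → LPath Tr → Prop
  | .anext χ φ, σ => asatA χ (σ.acts 0) ∧ asatS Tr φ (σ.states 1)
  | .unt φ χ χ' φ', σ =>
      ∃ j, asatA χ' (σ.acts j) ∧ asatS Tr φ' (σ.states (j + 1)) ∧
        (∀ i ≤ j, asatS Tr φ (σ.states i)) ∧ (∀ i < j, asatA χ (σ.acts i))
  | .wunt φ χ χ' φ', σ =>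
      (∃ j, asatA χ' (σ.acts j) ∧ asatS Tr φ' (σ.states (j + 1)) ∧
        (∀ i ≤ j, asatS Tr φ (σ.states i)) ∧ (∀ i < j, asatA χ (σ.acts i))) ∨
      (∀ i, asatS Tr φ (σ.states i) ∧ asatA χ (σ.acts i))
end

mutual
/-- CTL state formulas over atomic propositions `AP`: `φ ::= true | p | ¬φ | φ∧φ' | ∃π`. -/
inductive CSF (AP : Type) : Type
  | tt : CSF AP
  | atom : AP → CSF AP
  | neg : CSF AP → CSF AP
  | and : CSF AP → CSF AP → CSF AP
  | ex : CPF AP → CSF AP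

/-- CTL path formulas over atomic propositions `AP`: `π ::= Xφ | φ U φ' | φ W φ'`. -/
inductive CPF (AP : Type) : Type
  | next : CSF AP → CPF AP
  | unt : CSF AP → CSF AP → CPF AP
  | wunt : CSF AP → CSF AP → CPF AP
end

/-- Disjunction of CTL state formulas, expressed with `¬` and `∧`. -/
def CSF.or {AP : Type} (φ ψ : CSF AP) : CSF AP := .neg (.and (.neg φ) (.neg ψ))

mutual
/-- Satisfaction of CTL state formulas at a state of a Kripke structure. -/
def csatS {S AP : Type} (R : S → S → Prop) (Lab : S → Set AP) : CSF AP → S → Prop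
  | .tt, _ => True
  | .atom p, s => p ∈ Lab s
  | .neg φ, s => ¬ csatS R Lab φ s
  | .and φ ψ, s => csatS R Lab φ s ∧ csatS R Lab ψ s
  | .ex π, s => ∃ σ : KPath R, σ.states 0 = s ∧ csatP R Lab π σ

/-- Satisfaction of CTL path formulas on a path of a Kripke structure (standard
semantics; `W` is the weak until). -/
def csatP {S AP : Type} (R : S → S → Prop) (Lab : S → Set AP) : CPF AP → KPath R → Prop
  | .next φ, σ => csatS R Lab φ (σ.states 1)
  | .unt φ φ', σ =>
      ∃ j, csatS R Lab φ' (σ.states j) ∧ ∀ i < j, csatS R Lab φ (σ.states i)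
  | .wunt φ φ', σ =>
      (∃ j, csatS R Lab φ' (σ.states j) ∧ ∀ i < j, csatS R Lab φ (σ.states i)) ∨
      (∀ i, csatS R Lab φ (σ.states i))
end

section ksConstruction

variable {S Act : Type} (Tr : S → Act → S → Prop)

/-- States of the Kripke structure `ks'(L)`: the states of `L` together with one fresh
state for each transition of `L`. -/
abbrev KState := S ⊕ {t : S × Act × S // Tr t.1 t.2.1 t.2.2}

/-- The fresh atomic proposition `F` (the atomic propositions of `ks'(L)` are `Act ∪ {F}`). -/
def Fprop (Act : Type) : Act ⊕ Unit := Sum.inr ()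

/-- Transitions of `ks'(L)`: for every transition `(s₀, α, s₁)` of `L`, the new state
`(s₀, α, s₁)` sits between `s₀` and `s₁`. -/
def KTrans : KState Tr → KState Tr → Prop
  | .inl s, .inr t => t.1.1 = s
  | .inr t, .inl s => t.1.2.2 = s
  | _, _ => False

/-- Labelling of `ks'(L)`: original states are labelled `{F}`, the state corresponding
to a transition `(s₀, α, s₁)` is labelled `{α}`. -/
def KLab : KState Tr → Set (Act ⊕ Unit)
  | .inl _ => {Sum.inr ()}
  | .inr t => {Sum.inl t.1.2.1}

/-- The path `ks'(σ)` in `ks'(L)` induced by a path `σ` in `L`: between consecutive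
states of `σ` the corresponding transition-state is inserted. -/
def ksPath (σ : LPath Tr) : KPath (KTrans Tr) where
  states n :=
    if n % 2 = 0 then Sum.inl (σ.states (n / 2))
    else Sum.inr ⟨(σ.states (n / 2), σ.acts (n / 2), σ.states (n / 2 + 1)), σ.valid (n / 2)⟩
  valid n := by
    rcases Nat.even_or_odd n with ⟨k, hk⟩ | ⟨k, hk⟩
    · have h1 : n % 2 = 0 := by omega
      have h2 : ¬ (n + 1) % 2 = 0 := by omega
      have h3 : (n + 1) / 2 = n / 2 := by omega
      simp only [h1, h2, if_true, if_false, h3, KTrans]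
    · have h1 : ¬ n % 2 = 0 := by omega
      have h2 : (n + 1) % 2 = 0 := by omega
      have h3 : (n + 1) / 2 = n / 2 + 1 := by omega
      simp only [h1, h2, if_true, if_false, h3, KTrans]

end ksConstruction

/-- The atomic proposition `F`, as a CTL state formula. -/
def Fsf (Act : Type) : CSF (Act ⊕ Unit) := .atom (Fprop Act)

/-- Reinterpretation of an action formula `χ` as a CTL state formula over `Act ∪ {F}`
(actions are reused as atomic propositions). -/
def aform {Act : Type} : AForm Act → CSF (Act ⊕ Unit)
  | .tt => .tt
  | .atom a => .atom (Sum.inl a)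
  | .neg χ => .neg (aform χ)
  | .and χ χ' => .and (aform χ) (aform χ')

mutual
/-- The translation `ks'` from ACTL state formulas to CTL state formulas. -/
def ksS {Act : Type} : ASF Act → CSF (Act ⊕ Unit)
  | .tt => .tt
  | .neg φ => .neg (ksS φ)
  | .and φ ψ => .and (ksS φ) (ksS ψ)
  | .ex π => .ex (ksP π)

/-- The translation `ks'` from ACTL path formulas to CTL path formulas:
`ks'(X_χ φ) = X(¬F ∧ χ ∧ ∃X(F ∧ ks'(φ)))`,
`ks'(φ _χU_χ' φ') = ((F ∧ ks'(φ)) ∨ (¬F ∧ χ)) U (¬F ∧ ∃((¬F ∧ χ') U (F ∧ ks'(φ'))))`,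
and analogously with `W` for the weak until. -/
def ksP {Act : Type} : APF Act → CPF (Act ⊕ Unit)
  | .anext χ φ =>
      .next (.and (.neg (Fsf Act))
        (.and (aform χ) (.ex (.next (.and (Fsf Act) (ksS φ))))))
  | .unt φ χ χ' φ' =>
      .unt (CSF.or (.and (Fsf Act) (ksS φ)) (.and (.neg (Fsf Act)) (aform χ)))
        (.and (.neg (Fsf Act))
          (.ex (.unt (.and (.neg (Fsf Act)) (aform χ')) (.and (Fsf Act) (ksS φ')))))
  | .wunt φ χ χ' φ' =>
      .wunt (CSF.or (.and (Fsf Act) (ksS φ)) (.and (.neg (Fsf Act)) (aform χ)))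
        (.and (.neg (Fsf Act))
          (.ex (.unt (.and (.neg (Fsf Act)) (aform χ')) (.and (Fsf Act) (ksS φ')))))
end

section Helpers

/-- Shift of a Kripke path by `m` steps. -/
def KPath.shift {S : Type} {R : S → S → Prop} (τ : KPath R) (m : ℕ) : KPath R where
  states n := τ.states (m + n)
  valid n := τ.valid (m + n)

theorem KPath.ext' {S : Type} {R : S → S → Prop} {τ τ' : KPath R}
    (h : ∀ n, τ.states n = τ'.states n) : τ = τ' := by
  obtain ⟨f, hf⟩ := τ; obtain ⟨g, hg⟩ := τ'
  have : f = g := funext h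
  subst this
  rfl

variable {S Act : Type} {Tr : S → Act → S → Prop}

theorem ksPath_even (σ : LPath Tr) (k : ℕ) :
    (ksPath Tr σ).states (2 * k) = Sum.inl (σ.states k) := by
  have h1 : 2 * k % 2 = 0 := by omega
  have h2 : 2 * k / 2 = k := by omega
  simp [ksPath, h1, h2]

theorem ksPath_odd (σ : LPath Tr) (k : ℕ) :
    (ksPath Tr σ).states (2 * k + 1) =
      Sum.inr ⟨(σ.states k, σ.acts k, σ.states (k + 1)), σ.valid k⟩ := by
  have h1 : (2 * k + 1) % 2 = 1 := by omega
  have h2 : (2 * k + 1) / 2 = k := by omega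
  simp [ksPath, h1, h2]

theorem step_inl {τ : KPath (KTrans Tr)} {n : ℕ} {s : S}
    (h : τ.states n = Sum.inl s) :
    ∃ t, τ.states (n + 1) = Sum.inr t ∧ t.1.1 = s := by
  have hv := τ.valid n
  rw [h] at hv
  rcases hx : τ.states (n + 1) with s' | t
  · rw [hx] at hv; simp [KTrans] at hv
  · rw [hx] at hv; exact ⟨t, rfl, hv⟩

theorem step_inr {τ : KPath (KTrans Tr)} {n : ℕ} {t}
    (h : τ.states n = Sum.inr t) :
    τ.states (n + 1) = Sum.inl t.1.2.2 := by
  have hv := τ.valid n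
  rw [h] at hv
  rcases hx : τ.states (n + 1) with s' | t'
  · rw [hx] at hv; simp [KTrans] at hv; rw [hv]
  · rw [hx] at hv; simp [KTrans] at hv

theorem csat_F_inl (s : S) :
    csatS (KTrans Tr) (KLab Tr) (Fsf Act) (Sum.inl s) := by
  simp [csatS, Fsf, KLab, Fprop]

theorem csat_F_inr (t) :
    ¬ csatS (KTrans Tr) (KLab Tr) (Fsf Act) (Sum.inr t) := by
  simp [csatS, Fsf, KLab, Fprop]

theorem csat_aform (χ : AForm Act) (t) :
    csatS (KTrans Tr) (KLab Tr) (aform χ) (Sum.inr t) ↔ asatA χ t.1.2.1 := by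
  induction χ with
  | tt => simp [aform, csatS, asatA]
  | atom a => simp [aform, csatS, asatA, KLab, eq_comm]
  | neg χ ih => simp only [aform, csatS, asatA]; exact not_congr ih
  | and χ χ' ih ih' => simp only [aform, csatS, asatA]; exact and_congr ih ih'

theorem csat_or {S' AP : Type} (R : S' → S' → Prop) (Lab : S' → Set AP)
    (a b : CSF AP) (s : S') :
    csatS R Lab (CSF.or a b) s ↔ csatS R Lab a s ∨ csatS R Lab b s := by
  simp only [CSF.or, csatS]
  tauto

/-- Every Kripke path starting at an original state comes from an LTS path. -/
theorem exists_lpath (τ : KPath (KTrans Tr)) (s : S) (h0 : τ.states 0 = Sum.inl s) :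
    ∃ σ : LPath Tr, σ.states 0 = s ∧ ksPath Tr σ = τ := by
  classical
  have alt : ∀ k, ∃ t : {t : S × Act × S // Tr t.1 t.2.1 t.2.2},
      τ.states (2 * k) = Sum.inl t.1.1 ∧ τ.states (2 * k + 1) = Sum.inr t ∧
      τ.states (2 * k + 2) = Sum.inl t.1.2.2 := by
    intro k
    induction k with
    | zero =>
        obtain ⟨t, ht, hts⟩ := step_inl h0
        refine ⟨t, ?_, ht, step_inr ht⟩
        rw [show (2 * 0 : ℕ) = 0 from rfl, h0, hts]
    | succ k ih =>
        obtain ⟨t, _, _, h3⟩ := ih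
        have h3' : τ.states (2 * (k + 1)) = Sum.inl t.1.2.2 := by
          rw [show 2 * (k + 1) = 2 * k + 2 from by omega]; exact h3
        obtain ⟨t', ht', hts'⟩ := step_inl h3'
        refine ⟨t', ?_, ht', step_inr ht'⟩
        rw [h3', hts']
  choose T hT1 hT2 hT3 using alt
  have hlink : ∀ k, (T (k + 1)).1.1 = (T k).1.2.2 := by
    intro k
    have h := hT1 (k + 1)
    have h2 : τ.states (2 * (k + 1)) = Sum.inl (T k).1.2.2 := by
      rw [show 2 * (k + 1) = 2 * k + 2 from by omega]; exact hT3 k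
    rw [h2] at h
    exact (Sum.inl_injective h).symm
  refine ⟨⟨fun k => (T k).1.1, fun k => (T k).1.2.1, ?_⟩, ?_, ?_⟩
  · intro k
    have h := (T k).2
    show Tr (T k).1.1 (T k).1.2.1 (T (k + 1)).1.1
    rw [hlink k]
    exact h
  · have h := hT1 0
    rw [show (2 * 0 : ℕ) = 0 from rfl, h0] at h
    exact (Sum.inl_injective h).symm
  · apply KPath.ext'
    intro n
    rcases Nat.even_or_odd n with ⟨k, hk⟩ | ⟨k, hk⟩
    · have hn : n = 2 * k := by omega
      subst hn
      rw [ksPath_even]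
      exact (hT1 k).symm
    · have hn : n = 2 * k + 1 := by omega
      subst hn
      rw [ksPath_odd, hT2 k]
      congr 1
      apply Subtype.ext
      show ((T k).1.1, (T k).1.2.1, (T (k + 1)).1.1) = (T k).1
      rw [hlink k]

/-- Along the inner until-path starting at a transition state, the witness is
forced to be at position 1. -/
theorem inner_forced (ψ : CSF (Act ⊕ Unit)) (τ : KPath (KTrans Tr)) (t)
    (h0 : τ.states 0 = Sum.inr t) (χ' : AForm Act)
    (h : ∃ j, csatS (KTrans Tr) (KLab Tr) (.and (Fsf Act) ψ) (τ.states j) ∧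
      ∀ i < j, csatS (KTrans Tr) (KLab Tr)
        (.and (.neg (Fsf Act)) (aform χ')) (τ.states i)) :
    asatA χ' t.1.2.1 ∧ csatS (KTrans Tr) (KLab Tr) ψ (Sum.inl t.1.2.2) := by
  obtain ⟨j, hj, hall⟩ := h
  have h1 : τ.states 1 = Sum.inl t.1.2.2 := step_inr h0
  simp only [csatS] at hj
  match j with
  | 0 =>
      rw [h0] at hj
      exact absurd hj.1 (csat_F_inr t)
  | 1 =>
      rw [h1] at hj
      have h00 := hall 0 (by omega)
      simp only [csatS] at h00
      rw [h0] at h00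
      exact ⟨(csat_aform χ' t).1 h00.2, hj.2⟩
  | (n + 2) =>
      have h2 := hall 1 (by omega)
      simp only [csatS] at h2
      rw [h1] at h2
      exact absurd (csat_F_inl _) h2.1

theorem unt_equiv (σ : LPath Tr) (φ φ' : ASF Act) (χ χ' : AForm Act)
    (hφ : ∀ k, asatS Tr φ (σ.states k) ↔
      csatS (KTrans Tr) (KLab Tr) (ksS φ) (Sum.inl (σ.states k)))
    (hφ' : ∀ k, asatS Tr φ' (σ.states k) ↔
      csatS (KTrans Tr) (KLab Tr) (ksS φ') (Sum.inl (σ.states k))) :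
    (∃ j, asatA χ' (σ.acts j) ∧ asatS Tr φ' (σ.states (j + 1)) ∧
        (∀ i ≤ j, asatS Tr φ (σ.states i)) ∧ (∀ i < j, asatA χ (σ.acts i))) ↔
    (∃ J, csatS (KTrans Tr) (KLab Tr)
        (.and (.neg (Fsf Act))
          (.ex (.unt (.and (.neg (Fsf Act)) (aform χ')) (.and (Fsf Act) (ksS φ')))))
        ((ksPath Tr σ).states J) ∧
      ∀ I < J, csatS (KTrans Tr) (KLab Tr)
        (CSF.or (.and (Fsf Act) (ksS φ)) (.and (.neg (Fsf Act)) (aform χ)))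
        ((ksPath Tr σ).states I)) := by
  constructor
  · rintro ⟨j, hχ', hφ'j, hφall, hχall⟩
    refine ⟨2 * j + 1, ?_, ?_⟩
    · rw [ksPath_odd]
      simp only [csatS]
      refine ⟨csat_F_inr _, KPath.shift (ksPath Tr σ) (2 * j + 1), ksPath_odd σ j, ?_⟩
      simp only [csatP]
      refine ⟨1, ?_, ?_⟩
      · have hst : (KPath.shift (ksPath Tr σ) (2 * j + 1)).states 1 =
            Sum.inl (σ.states (j + 1)) := by
          show (ksPath Tr σ).states (2 * j + 1 + 1) = _
          rw [show 2 * j + 1 + 1 = 2 * (j + 1) from by omega, ksPath_even]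
        rw [hst]
        simp only [csatS]
        exact ⟨csat_F_inl _, (hφ' (j + 1)).1 hφ'j⟩
      · intro i hi
        have hi0 : i = 0 := by omega
        subst hi0
        have hst : (KPath.shift (ksPath Tr σ) (2 * j + 1)).states 0 =
            Sum.inr ⟨(σ.states j, σ.acts j, σ.states (j + 1)), σ.valid j⟩ :=
          ksPath_odd σ j
        rw [hst]
        simp only [csatS]
        exact ⟨csat_F_inr _, (csat_aform χ' _).2 hχ'⟩
    · intro I hI
      rcases Nat.even_or_odd I with ⟨i, hk⟩ | ⟨i, hk⟩
      · have hI' : I = 2 * i := by omega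
        subst hI'
        rw [ksPath_even, csat_or]
        left
        simp only [csatS]
        exact ⟨csat_F_inl _, (hφ i).1 (hφall i (by omega))⟩
      · have hI' : I = 2 * i + 1 := by omega
        subst hI'
        rw [ksPath_odd, csat_or]
        right
        simp only [csatS]
        exact ⟨csat_F_inr _, (csat_aform χ _).2 (hχall i (by omega))⟩
  · rintro ⟨J, hJ, hall⟩
    rcases Nat.even_or_odd J with ⟨j, hk⟩ | ⟨j, hk⟩
    · exfalso
      have hJ' : J = 2 * j := by omega
      subst hJ'
      rw [ksPath_even] at hJ
      simp only [csatS] at hJ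
      exact hJ.1 (csat_F_inl _)
    · have hJ' : J = 2 * j + 1 := by omega
      subst hJ'
      rw [ksPath_odd] at hJ
      simp only [csatS] at hJ
      obtain ⟨-, τ, hτ0, hτu⟩ := hJ
      simp only [csatP] at hτu
      have key := inner_forced (Tr := Tr) (ksS φ') τ _ hτ0 χ' hτu
      refine ⟨j, key.1, (hφ' (j + 1)).2 key.2, ?_, ?_⟩
      · intro i hij
        have h := hall (2 * i) (by omega)
        rw [ksPath_even, csat_or] at h
        rcases h with h | h
        · simp only [csatS] at h
          exact (hφ i).2 h.2
        · simp only [csatS] at h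
          exact absurd (csat_F_inl _) h.1
      · intro i hij
        have h := hall (2 * i + 1) (by omega)
        rw [ksPath_odd, csat_or] at h
        rcases h with h | h
        · simp only [csatS] at h
          exact absurd h.1 (csat_F_inr _)
        · simp only [csatS] at h
          exact (csat_aform χ _).1 h.2

theorem forever_equiv (σ : LPath Tr) (φ : ASF Act) (χ : AForm Act)
    (hφ : ∀ k, asatS Tr φ (σ.states k) ↔
      csatS (KTrans Tr) (KLab Tr) (ksS φ) (Sum.inl (σ.states k))) :
    (∀ i, asatS Tr φ (σ.states i) ∧ asatA χ (σ.acts i)) ↔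
    (∀ I, csatS (KTrans Tr) (KLab Tr)
      (CSF.or (.and (Fsf Act) (ksS φ)) (.and (.neg (Fsf Act)) (aform χ)))
      ((ksPath Tr σ).states I)) := by
  constructor
  · intro h I
    rcases Nat.even_or_odd I with ⟨i, hk⟩ | ⟨i, hk⟩
    · have hI' : I = 2 * i := by omega
      subst hI'
      rw [ksPath_even, csat_or]
      left
      simp only [csatS]
      exact ⟨csat_F_inl _, (hφ i).1 (h i).1⟩
    · have hI' : I = 2 * i + 1 := by omega
      subst hI'
      rw [ksPath_odd, csat_or]
      right
      simp only [csatS]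
      exact ⟨csat_F_inr _, (csat_aform χ _).2 (h i).2⟩
  · intro h i
    constructor
    · have h' := h (2 * i)
      rw [ksPath_even, csat_or] at h'
      rcases h' with h' | h'
      · simp only [csatS] at h'
        exact (hφ i).2 h'.2
      · simp only [csatS] at h'
        exact absurd (csat_F_inl _) h'.1
    · have h' := h (2 * i + 1)
      rw [ksPath_odd, csat_or] at h'
      rcases h' with h' | h'
      · simp only [csatS] at h'
        exact absurd h'.1 (csat_F_inr _)
      · simp only [csatS] at h'
        exact (csat_aform χ _).1 h'.2

end Helpers

mutual

theorem keyS {S Act : Type} (Tr : S → Act → S → Prop) (φ : ASF Act) (s : S) :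
    asatS Tr φ s ↔ csatS (KTrans Tr) (KLab Tr) (ksS φ) (Sum.inl s) :=
  match φ with
  | .tt => by simp [asatS, ksS, csatS]
  | .neg φ => by
      simp only [asatS, ksS, csatS]
      exact not_congr (keyS Tr φ s)
  | .and φ ψ => by
      simp only [asatS, ksS, csatS]
      exact and_congr (keyS Tr φ s) (keyS Tr ψ s)
  | .ex π => by
      simp only [asatS, ksS, csatS]
      constructor
      · rintro ⟨σ, h0, hπ⟩
        refine ⟨ksPath Tr σ, ?_, (keyP Tr π σ).1 hπ⟩
        rw [show (ksPath Tr σ).states 0 = Sum.inl (σ.states 0) from ksPath_even σ 0, h0]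
      · rintro ⟨τ, h0, hπ⟩
        obtain ⟨σ, hσ0, hστ⟩ := exists_lpath τ s h0
        subst hστ
        exact ⟨σ, hσ0, (keyP Tr π σ).2 hπ⟩

theorem keyP {S Act : Type} (Tr : S → Act → S → Prop) (π : APF Act) (σ : LPath Tr) :
    asatP Tr π σ ↔ csatP (KTrans Tr) (KLab Tr) (ksP π) (ksPath Tr σ) :=
  match π with
  | .anext χ φ => by
      simp only [asatP, ksP, csatP]
      rw [show (ksPath Tr σ).states 1 =
        Sum.inr ⟨(σ.states 0, σ.acts 0, σ.states 1), σ.valid 0⟩ from ksPath_odd σ 0]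
      simp only [csatS]
      constructor
      · rintro ⟨hχ, hφ⟩
        refine ⟨csat_F_inr _, (csat_aform χ _).2 hχ,
          KPath.shift (ksPath Tr σ) 1, ksPath_odd σ 0, ?_⟩
        simp only [csatP, csatS]
        have h1 : (KPath.shift (ksPath Tr σ) 1).states 1 = Sum.inl (σ.states 1) := by
          show (ksPath Tr σ).states (1 + 1) = _
          rw [show (1 + 1 : ℕ) = 2 * 1 from rfl]
          exact ksPath_even σ 1
        rw [h1]
        exact ⟨csat_F_inl _, (keyS Tr φ _).1 hφ⟩
      · rintro ⟨-, hχ, τ, hτ0, hτn⟩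
        refine ⟨(csat_aform χ _).1 hχ, ?_⟩
        simp only [csatP, csatS] at hτn
        rw [step_inr hτ0] at hτn
        exact (keyS Tr φ _).2 hτn.2
  | .unt φ χ χ' φ' => by
      simp only [asatP, ksP, csatP]
      exact unt_equiv σ φ φ' χ χ' (fun k => keyS Tr φ _) (fun k => keyS Tr φ' _)
  | .wunt φ χ χ' φ' => by
      simp only [asatP, ksP, csatP]
      exact or_congr
        (unt_equiv σ φ φ' χ χ' (fun k => keyS Tr φ _) (fun k => keyS Tr φ' _))
        (forever_equiv σ φ χ (fun k => keyS Tr φ _))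

end

/-- Let `L` be an LTS, `σ` a path in `L`, and `φ` an ACTL formula
(state formula or path formula). Then the mapping `ks'` preserves truth:
`L,σ ⊨ φ` iff `ks'(L), ks'(σ) ⊨ ks'(φ)`. -/
theorem ks'_preserves_truth {S Act : Type} (Tr : S → Act → S → Prop) (σ : LPath Tr) :
    (∀ φ : ASF Act,
      asatS Tr φ (σ.states 0) ↔
        csatS (KTrans Tr) (KLab Tr) (ksS φ) (Sum.inl (σ.states 0))) ∧
    (∀ π : APF Act,
      asatP Tr π σ ↔ csatP (KTrans Tr) (KLab Tr) (ksP π) (ksPath Tr σ)) := by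
  exact ⟨fun φ => keyS Tr φ _, fun π => keyP Tr π σ⟩

end Stmt6
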